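/- arXiv:1604.04230 — 5 statements merged into one kernel-verified Lean document; each statement's English description precedes it below -/
import Mathlib

section
/- Let P ⊆ {0,1}^ℕ be a non-empty clopen set. Then every weakly (Kurtz) random sequence Z ∈ {0,1}^ℕ is multiply recurrent in P. -/
open MeasureTheory

/-- `σ` is a prefix of the infinite binary sequence `Z`. -/
def IsPrefixOf (σ : List Bool) (Z : ℕ → Bool) : Prop :=
  ∀ i : ℕ, i < σ.length → σ.getD i false = Z i

/-- The open subset `⟦S⟧` of Cantor space generated by a set of finite binary strings. -/
def openCl (S : Set (List Bool)) : Set (ℕ → Bool) :=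
  {Z | ∃ σ ∈ S, IsPrefixOf σ Z}

/-- A set of finite binary strings is computably enumerable. -/
def CEStrings (S : Set (List Bool)) : Prop :=
  ∃ f : ℕ → Option (List Bool), Computable f ∧ S = {σ | ∃ n, f n = some σ}

/-- `P` is a Π⁰₁ class: the complement of the open set generated by a c.e. set of strings. -/
def Pi01Class (P : Set (ℕ → Bool)) : Prop :=
  ∃ S : Set (List Bool), CEStrings S ∧ P = (openCl S)ᶜ

/-- The shift operator `T` on Cantor space: `T Z n = Z (n+1)`. -/
def shift (Z : ℕ → Bool) : ℕ → Bool := fun n => Z (n + 1)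

/-- `Z` is `k`-recurrent in `P`: for some `n ≥ 1`, `T^{n i} Z ∈ P` for all `1 ≤ i ≤ k`. -/
def KRecurrentIn (k : ℕ) (P : Set (ℕ → Bool)) (Z : ℕ → Bool) : Prop :=
  ∃ n : ℕ, 1 ≤ n ∧ ∀ i : ℕ, 1 ≤ i → i ≤ k → shift^[n * i] Z ∈ P

/-- `Z` is multiply recurrent in `P`: `k`-recurrent in `P` for every `k ≥ 1`. -/
def MultiplyRecurrentIn (P : Set (ℕ → Bool)) (Z : ℕ → Bool) : Prop :=
  ∀ k : ℕ, 1 ≤ k → KRecurrentIn k P Z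

/-- `μ` is the uniform (fair-coin) product measure on Cantor space:
each basic cylinder determined by a string `σ` has measure `2^{-|σ|}`. -/
def IsUniformMeasure (μ : Measure (ℕ → Bool)) : Prop :=
  ∀ σ : List Bool, μ {Z | IsPrefixOf σ Z} = 2⁻¹ ^ σ.length

/-- A uniformly computably enumerable sequence of sets of strings. -/
def UniformlyCE (S : ℕ → Set (List Bool)) : Prop :=
  ∃ f : ℕ → ℕ → Option (List Bool), Computable₂ f ∧
    ∀ m, S m = {σ | ∃ n, f m n = some σ}

/-- A Martin-Löf test with respect to the measure `μ`. -/
def MLTest (μ : Measure (ℕ → Bool)) (S : ℕ → Set (List Bool)) : Prop :=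
  UniformlyCE S ∧ ∀ m, μ (openCl (S m)) ≤ 2⁻¹ ^ m

/-- `Z` is Martin-Löf random w.r.t. `μ`. -/
def MLRandom (μ : Measure (ℕ → Bool)) (Z : ℕ → Bool) : Prop :=
  ∀ S : ℕ → Set (List Bool), MLTest μ S → ∃ m, Z ∉ openCl (S m)

/-- A real is computable if some computable sequence of rationals approximates it
within `2^{-j}`. -/
def ComputableReal (x : ℝ) : Prop :=
  ∃ q : ℕ → ℚ, Computable q ∧ ∀ j : ℕ, |x - (q j : ℝ)| ≤ 2⁻¹ ^ j

/-- A Schnorr test w.r.t. `μ`: a Martin-Löf test whose levels have uniformly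
computable measures. -/
def SchnorrTest (μ : Measure (ℕ → Bool)) (S : ℕ → Set (List Bool)) : Prop :=
  UniformlyCE S ∧ (∀ m, μ (openCl (S m)) ≤ 2⁻¹ ^ m) ∧
    ∃ q : ℕ → ℕ → ℚ, Computable₂ q ∧
      ∀ m j : ℕ, |(μ (openCl (S m))).toReal - (q m j : ℝ)| ≤ 2⁻¹ ^ j

/-- `Z` is Schnorr random w.r.t. `μ`. -/
def SchnorrRandom (μ : Measure (ℕ → Bool)) (Z : ℕ → Bool) : Prop :=
  ∀ S : ℕ → Set (List Bool), SchnorrTest μ S → ∃ m, Z ∉ openCl (S m)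

/-- `Z` is weakly (Kurtz) random w.r.t. `μ`: it belongs to no Π⁰₁ class of measure `0`. -/
def KurtzRandom (μ : Measure (ℕ → Bool)) (Z : ℕ → Bool) : Prop :=
  ∀ P : Set (ℕ → Bool), Pi01Class P → μ P = 0 → Z ∉ P

/-!
For `σ ∈ F` and a step `q ≥ |σ|`, the event that `σ` occurs at positions `0, q, …, (k - 1)q` has
probability `2^{-k|σ|}`. Shifted by `q` it reads only the coordinates in `[q, (k + 1)q)`, so along
steps `q_j` with `(k + 1)q_j ≤ q_{j+1}` these events are independent (for sets determined by
finitely many bits, independence is a counting statement), and almost surely one of them happens;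
then `σ` occurs at `q_j, 2q_j, …, kq_j`, so the sequence is `k`-recurrent in `⟦F⟧`. Hence the
sequences that are not `k`-recurrent form a null set. It is a Π⁰₁ class, since `k`-recurrence in a
clopen set is witnessed by a finite prefix, so no weakly random sequence lies in it.
-/

open Set
open scoped ENNReal

lemma shift_iterate_apply (m : ℕ) (Z : ℕ → Bool) (t : ℕ) : shift^[m] Z t = Z (t + m) := by
  induction m generalizing Z with
  | zero => rfl
  | succ m ih => rw [Function.iterate_succ_apply, ih]; simp only [shift, Nat.add_assoc]

lemma isPrefixOf_iff {σ : List Bool} {Z : ℕ → Bool} :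
    IsPrefixOf σ Z ↔ ∀ (i : ℕ) (h : i < σ.length), σ[i] = Z i :=
  forall₂_congr fun i h => by rw [List.getD_eq_getElem _ _ h]

lemma isPrefixOf_map_range (Z : ℕ → Bool) (M : ℕ) : IsPrefixOf ((List.range M).map Z) Z :=
  isPrefixOf_iff.2 fun i h => by simp

lemma IsPrefixOf.shift_iterate_of_prefix_drop {τ s : List Bool} {Z : ℕ → Bool} {m : ℕ}
    (hτ : IsPrefixOf τ Z) (hs : s <+: τ.drop m) : IsPrefixOf s (shift^[m] Z) := by
  obtain ⟨_, hs⟩ := List.prefix_iff_getElem.1 hs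
  refine isPrefixOf_iff.2 fun i hi => ?_
  rw [hs i hi, List.getElem_drop, isPrefixOf_iff.1 hτ, shift_iterate_apply, Nat.add_comm]

lemma IsPrefixOf.prefix_drop_map_range {s : List Bool} {Z : ℕ → Bool} {m M : ℕ}
    (hs : IsPrefixOf s (shift^[m] Z)) (hM : m + s.length ≤ M) :
    s <+: ((List.range M).map Z).drop m := by
  refine List.prefix_iff_getElem.2
    ⟨by simp only [List.length_drop, List.length_map, List.length_range]; omega, fun i hi => ?_⟩
  rw [isPrefixOf_iff.1 hs i hi, shift_iterate_apply]
  simp [Nat.add_comm]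

lemma ceStrings_setOf_exists {β : Type*} [Primcodable β] {R : List Bool → β → Prop}
    (hR : PrimrecRel R) : CEStrings {τ | ∃ b, R τ b} := by
  classical
  refine ⟨fun m => (Encodable.decode (α := List Bool × β) m).bind
    fun p => if R p.1 p.2 then some p.1 else none, ?_, ?_⟩
  · have hsome : Primrec fun x : ℕ × (List Bool × β) =>
        if R x.2.1 x.2.2 then some x.2.1 else none :=
      Primrec.ite (hR.comp (Primrec.fst.comp Primrec.snd) (Primrec.snd.comp Primrec.snd))
        (Primrec.option_some.comp (Primrec.fst.comp Primrec.snd)) (Primrec.const none)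
    exact (Primrec.option_bind Primrec.decode hsome.to₂).to_comp
  · ext τ
    constructor
    · rintro ⟨b, hb⟩
      exact ⟨Encodable.encode (τ, b), by simp [hb]⟩
    · rintro ⟨m, hm⟩
      obtain ⟨⟨τ', b⟩, -, h⟩ := Option.bind_eq_some_iff.1 hm
      by_cases hR : R τ' b
      · simp only [hR, if_true, Option.some.injEq] at h
        exact ⟨b, h ▸ hR⟩
      · simp [hR] at h

lemma primrecRel_isPrefix {α : Type*} [Primcodable α] [DecidableEq α] :
    PrimrecRel (fun s t : List α => s <+: t) :=
  (Primrec.eq.comp (Primrec.list_take.comp (Primrec.list_length.comp Primrec.fst) Primrec.snd)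
    Primrec.fst).of_eq fun _ => (List.prefix_iff_eq_take.trans eq_comm).symm

def RecurrenceWitness (F : Finset (List Bool)) (k : ℕ) (τ : List Bool) (n : ℕ) : Prop :=
  1 ≤ n ∧ ∀ i < k, ∃ s ∈ F, s <+: τ.drop (n * (i + 1))

lemma primrecRel_recurrenceWitness (F : Finset (List Bool)) (k : ℕ) :
    PrimrecRel (RecurrenceWitness F k) := by
  have hocc : PrimrecRel fun (i : ℕ) (p : List Bool × ℕ) =>
      ∃ s ∈ F.toList, s <+: p.1.drop (p.2 * (i + 1)) :=
    (primrecRel_isPrefix.exists_mem_list).comp (Primrec.const F.toList)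
      (Primrec.list_drop.comp (Primrec.nat_mul.comp (Primrec.snd.comp Primrec.snd)
        (Primrec.succ.comp Primrec.fst)) (Primrec.fst.comp Primrec.snd))
  exact (Primrec.nat_le.comp (Primrec.const 1) Primrec.snd).and
    (hocc.forall_mem_list.comp (Primrec.const (List.range k)) Primrec.id) |>.of_eq fun p => by
      simp [RecurrenceWitness]

lemma openCl_recurrenceWitness (F : Finset (List Bool)) (k : ℕ) :
    openCl {τ | ∃ n, RecurrenceWitness F k τ n} = {Z | KRecurrentIn k (openCl ↑F) Z} := by
  ext Z
  constructor
  · rintro ⟨τ, ⟨n, hn, hocc⟩, hτ⟩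
    refine ⟨n, hn, fun i hi hik => ?_⟩
    obtain ⟨s, hsF, hs⟩ := hocc (i - 1) (by omega)
    rw [Nat.sub_add_cancel hi] at hs
    exact ⟨s, hsF, hτ.shift_iterate_of_prefix_drop hs⟩
  · rintro ⟨n, hn, hrec⟩
    choose s hsF hs using fun i (hi : i < k) => hrec (i + 1) (by omega) (by omega)
    refine ⟨(List.range (n * k + F.sup List.length)).map Z,
      ⟨n, hn, fun i hi => ⟨s i hi, hsF i hi, (hs i hi).prefix_drop_map_range ?_⟩⟩,
      isPrefixOf_map_range Z _⟩
    have := Finset.le_sup (f := List.length) (hsF i hi)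
    have := Nat.mul_le_mul_left n (show i + 1 ≤ k by omega)
    omega

lemma pi01Class_setOf_not_kRecurrentIn (F : Finset (List Bool)) (k : ℕ) :
    Pi01Class {Z | ¬ KRecurrentIn k (openCl ↑F) Z} :=
  ⟨_, ceStrings_setOf_exists (primrecRel_recurrenceWitness F k), by
    rw [openCl_recurrenceWitness]; rfl⟩

section DependsOn

variable {A B : Set (ℕ → Bool)} {s : Set ℕ}

lemma dependsOn_mem_inter (hA : DependsOn (· ∈ A) s) (hB : DependsOn (· ∈ B) s) :
    DependsOn (· ∈ A ∩ B) s :=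
  fun _ _ h => congrArg₂ And (hA h) (hB h)

lemma dependsOn_mem_compl (hA : DependsOn (· ∈ A) s) : DependsOn (· ∈ Aᶜ) s :=
  fun _ _ h => congrArg Not (hA h)

lemma dependsOn_mem_iInter {ι : Sort*} {E : ι → Set (ℕ → Bool)}
    (hE : ∀ j, DependsOn (· ∈ E j) s) : DependsOn (· ∈ ⋂ j, E j) s :=
  fun _ _ h => by simp only [mem_iInter]; exact propext (forall_congr' fun j => (hE j h).to_iff)

lemma dependsOn_mem_preimage_shift_iterate {b : ℕ} (a : ℕ) (hB : DependsOn (· ∈ B) (Iio b)) :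
    DependsOn (· ∈ shift^[a] ⁻¹' B) (Iio (a + b)) :=
  fun _ _ h => hB fun i hi => by
    rw [shift_iterate_apply, shift_iterate_apply]
    exact h _ (by simp only [mem_Iio] at hi ⊢; omega)

lemma dependsOn_mem_setOf_isPrefixOf (σ : List Bool) :
    DependsOn (· ∈ {Z | IsPrefixOf σ Z}) (Iio σ.length) :=
  fun _ _ h => propext (forall₂_congr fun i hi => by rw [h i hi])

lemma IsPrefixOf.mem_iff_of_dependsOn {σ : List Bool} {Z W : ℕ → Bool} {N : ℕ}
    (hA : DependsOn (· ∈ A) (Iio N)) (hN : N ≤ σ.length) (hZ : IsPrefixOf σ Z)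
    (hW : IsPrefixOf σ W) : Z ∈ A ↔ W ∈ A :=
  (hA fun i hi => (hZ i (lt_of_lt_of_le hi hN)).symm.trans (hW i (lt_of_lt_of_le hi hN))).to_iff

end DependsOn

def padFalse (σ : List Bool) : ℕ → Bool := fun v => σ.getD v false

lemma isPrefixOf_padFalse (σ : List Bool) : IsPrefixOf σ (padFalse σ) := fun _ _ => rfl

lemma isPrefixOf_padFalse_append (σ τ : List Bool) : IsPrefixOf σ (padFalse (σ ++ τ)) :=
  fun i hi => (List.getD_append _ _ _ i hi).symm

lemma shift_iterate_padFalse_append (σ τ : List Bool) :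
    shift^[σ.length] (padFalse (σ ++ τ)) = padFalse τ := by
  funext v
  rw [shift_iterate_apply, padFalse, List.getD_append_right _ _ _ _ (by omega),
    Nat.add_sub_cancel]
  rfl

lemma isPrefixOf_ofFn_iff {N : ℕ} {g : Fin N → Bool} {Z : ℕ → Bool} :
    IsPrefixOf (List.ofFn g) Z ↔ (fun i : Fin N => Z i) = g := by
  rw [isPrefixOf_iff, funext_iff]
  simp only [List.length_ofFn, List.getElem_ofFn]
  exact ⟨fun h i => (h i i.2).symm, fun h i hi => (h ⟨i, hi⟩).symm⟩

lemma measurableSet_setOf_isPrefixOf (σ : List Bool) : MeasurableSet {Z | IsPrefixOf σ Z} := by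
  simp only [IsPrefixOf, ofPred_forall]
  exact .iInter fun i => .iInter fun _ =>
    measurableSet_eq_fun measurable_const (measurable_pi_apply i)

lemma eq_iUnion_of_dependsOn {N : ℕ} {A : Set (ℕ → Bool)} (hA : DependsOn (· ∈ A) (Iio N)) :
    A = ⋃ g : {g : Fin N → Bool // padFalse (List.ofFn g) ∈ A},
      {Z | IsPrefixOf (List.ofFn g.1) Z} := by
  ext Z
  simp only [mem_iUnion]
  constructor
  · intro hZ
    have hpre : IsPrefixOf (List.ofFn fun i : Fin N => Z i) Z := isPrefixOf_ofFn_iff.2 rfl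
    exact ⟨⟨_, (hpre.mem_iff_of_dependsOn hA (List.length_ofFn).ge
      (isPrefixOf_padFalse _)).1 hZ⟩, hpre⟩
  · rintro ⟨⟨g, hg⟩, hZ⟩
    exact (hZ.mem_iff_of_dependsOn hA (List.length_ofFn).ge (isPrefixOf_padFalse _)).2 hg

section UniformMeasure

variable {μ : Measure (ℕ → Bool)} {A B : Set (ℕ → Bool)}

lemma IsUniformMeasure.measure_univ (hμ : IsUniformMeasure μ) : μ univ = 1 := by
  simpa [IsPrefixOf] using hμ []

lemma measurableSet_of_dependsOn {N : ℕ} (hA : DependsOn (· ∈ A) (Iio N)) : MeasurableSet A := by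
  rw [eq_iUnion_of_dependsOn hA]
  exact .iUnion fun g => measurableSet_setOf_isPrefixOf _

lemma measure_eq_natCard_mul (hμ : IsUniformMeasure μ) {N : ℕ}
    (hA : DependsOn (· ∈ A) (Iio N)) :
    μ A = Nat.card {g : Fin N → Bool // padFalse (List.ofFn g) ∈ A} * 2⁻¹ ^ N := by
  conv_lhs => rw [eq_iUnion_of_dependsOn hA]
  rw [measure_iUnion ?_ fun g => measurableSet_setOf_isPrefixOf _]
  · simp_rw [hμ _, List.length_ofFn, ENNReal.tsum_const, ENat.card_eq_coe_natCard]
    rfl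
  · rintro g h hgh
    refine disjoint_left.2 fun Z hg hh => hgh (Subtype.ext ?_)
    exact (isPrefixOf_ofFn_iff.1 hg).symm.trans (isPrefixOf_ofFn_iff.1 hh)

lemma natCard_inter_preimage_shift {a b : ℕ} (hA : DependsOn (· ∈ A) (Iio a)) :
    Nat.card {g : Fin (a + b) → Bool // padFalse (List.ofFn g) ∈ A ∩ shift^[a] ⁻¹' B} =
      Nat.card {g : Fin a → Bool // padFalse (List.ofFn g) ∈ A} *
        Nat.card {g : Fin b → Bool // padFalse (List.ofFn g) ∈ B} := by
  have hmem : ∀ p : (Fin a → Bool) × (Fin b → Bool),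
      (padFalse (List.ofFn p.1) ∈ A ∧ padFalse (List.ofFn p.2) ∈ B) ↔
        padFalse (List.ofFn (Fin.appendEquiv a b p)) ∈ A ∩ shift^[a] ⁻¹' B := by
    rintro ⟨g₁, g₂⟩
    have hshift := shift_iterate_padFalse_append (List.ofFn g₁) (List.ofFn g₂)
    rw [List.length_ofFn] at hshift
    simp only [Fin.appendEquiv, Equiv.coe_fn_mk, List.ofFn_fin_append, mem_inter_iff,
      mem_preimage]
    rw [hshift, (isPrefixOf_padFalse_append _ _).mem_iff_of_dependsOn hA
      (List.length_ofFn).ge (isPrefixOf_padFalse _)]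
  rw [← Nat.card_prod]
  exact Nat.card_congr (((Fin.appendEquiv a b).subtypeEquiv hmem).symm.trans
    Equiv.subtypeProdEquivProd)

lemma measure_inter_preimage_shift (hμ : IsUniformMeasure μ) {a b : ℕ}
    (hA : DependsOn (· ∈ A) (Iio a)) (hB : DependsOn (· ∈ B) (Iio b)) :
    μ (A ∩ shift^[a] ⁻¹' B) = μ A * μ B := by
  have hAB := dependsOn_mem_inter (hA.mono (Iio_subset_Iio le_self_add))
    (dependsOn_mem_preimage_shift_iterate a hB)
  rw [measure_eq_natCard_mul hμ hAB, natCard_inter_preimage_shift hA,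
    measure_eq_natCard_mul hμ hA, measure_eq_natCard_mul hμ hB, pow_add]
  push_cast
  ring

lemma measure_compl_of_dependsOn (hμ : IsUniformMeasure μ) {N : ℕ}
    (hA : DependsOn (· ∈ A) (Iio N)) : μ Aᶜ = 1 - μ A := by
  rw [measure_compl (measurableSet_of_dependsOn hA), hμ.measure_univ]
  exact ne_top_of_le_ne_top (hμ.measure_univ ▸ ENNReal.one_ne_top) (measure_mono (subset_univ A))

end UniformMeasure

section Independence

variable {μ : Measure (ℕ → Bool)} {a b : ℕ → ℕ} {E : ℕ → Set (ℕ → Bool)}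

lemma measure_biInter_preimage_shift (hμ : IsUniformMeasure μ)
    (hE : ∀ j, DependsOn (· ∈ E j) (Iio (b j))) (hab : ∀ j, a j + b j ≤ a (j + 1)) (m : ℕ) :
    μ (⋂ j ∈ Finset.range m, shift^[a j] ⁻¹' E j) = ∏ j ∈ Finset.range m, μ (E j) := by
  induction m with
  | zero => simp [hμ.measure_univ]
  | succ m ih =>
    have ha : Monotone a := monotone_nat_of_le_succ fun j => le_self_add.trans (hab j)
    have hdep : DependsOn (· ∈ ⋂ j ∈ Finset.range m, shift^[a j] ⁻¹' E j) (Iio (a m)) :=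
      dependsOn_mem_iInter fun j => dependsOn_mem_iInter fun hj =>
        (dependsOn_mem_preimage_shift_iterate (a j) (hE j)).mono
          (Iio_subset_Iio ((hab j).trans (ha (Finset.mem_range.1 hj))))
    rw [Finset.prod_range_succ, Finset.range_add_one, Finset.set_biInter_insert, inter_comm,
      measure_inter_preimage_shift hμ hdep (hE m), ih]

lemma measure_iInter_preimage_shift_eq_zero (hμ : IsUniformMeasure μ)
    (hE : ∀ j, DependsOn (· ∈ E j) (Iio (b j))) (hab : ∀ j, a j + b j ≤ a (j + 1))
    {c : ℝ≥0∞} (hc : c < 1) (hEc : ∀ j, μ (E j) ≤ c) :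
    μ (⋂ j, shift^[a j] ⁻¹' E j) = 0 := by
  refine le_antisymm (ge_of_tendsto' (ENNReal.tendsto_pow_atTop_nhds_zero_of_lt_one hc)
    fun m => ?_) bot_le
  calc μ (⋂ j, shift^[a j] ⁻¹' E j)
      ≤ μ (⋂ j ∈ Finset.range m, shift^[a j] ⁻¹' E j) :=
        measure_mono fun Z hZ => mem_iInter₂.2 fun j _ => mem_iInter.1 hZ j
    _ = ∏ j ∈ Finset.range m, μ (E j) := measure_biInter_preimage_shift hμ hE hab m
    _ ≤ c ^ m := by
        simpa using Finset.prod_le_pow_card (Finset.range m) _ c fun j _ => hEc j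

end Independence

def progressionCylinder (σ : List Bool) (k q : ℕ) : Set (ℕ → Bool) :=
  {W | ∀ i < k, IsPrefixOf σ (shift^[i * q] W)}

section ProgressionCylinder

variable {σ : List Bool} {q : ℕ}

lemma progressionCylinder_succ (σ : List Bool) (k q : ℕ) :
    progressionCylinder σ (k + 1) q =
      {W | IsPrefixOf σ W} ∩ shift^[q] ⁻¹' progressionCylinder σ k q := by
  ext W
  simp only [progressionCylinder, mem_ofPred_eq, mem_inter_iff, mem_preimage,
    Nat.forall_lt_succ_left, zero_mul, Function.iterate_zero_apply]
  refine and_congr_right fun _ => forall₂_congr fun i _ => ?_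
  rw [Nat.succ_mul, Function.iterate_add_apply]

lemma dependsOn_mem_progressionCylinder (hq : σ.length ≤ q) (k : ℕ) :
    DependsOn (· ∈ progressionCylinder σ k q) (Iio (k * q)) := by
  induction k with
  | zero => exact fun _ _ _ => propext (by simp [progressionCylinder])
  | succ k ih =>
    rw [progressionCylinder_succ, Nat.succ_mul, Nat.add_comm]
    exact dependsOn_mem_inter ((dependsOn_mem_setOf_isPrefixOf σ).mono
      (Iio_subset_Iio (hq.trans le_self_add))) (dependsOn_mem_preimage_shift_iterate q ih)

lemma measure_progressionCylinder {μ : Measure (ℕ → Bool)} (hμ : IsUniformMeasure μ)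
    (hq : σ.length ≤ q) (k : ℕ) : μ (progressionCylinder σ k q) = (2⁻¹ ^ σ.length) ^ k := by
  induction k with
  | zero => simp [progressionCylinder, hμ.measure_univ]
  | succ k ih =>
    rw [progressionCylinder_succ, measure_inter_preimage_shift hμ
      ((dependsOn_mem_setOf_isPrefixOf σ).mono (Iio_subset_Iio hq))
      (dependsOn_mem_progressionCylinder hq k), hμ, ih, pow_succ']

lemma kRecurrentIn_of_mem_progressionCylinder {F : Finset (List Bool)} (hσ : σ ∈ F) {k n : ℕ}
    {Z : ℕ → Bool} (hn : 1 ≤ n) (hZ : shift^[n] Z ∈ progressionCylinder σ k n) :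
    KRecurrentIn k (openCl ↑F) Z := by
  refine ⟨n, hn, fun i hi hik => ⟨σ, hσ, ?_⟩⟩
  have hi : n * i = (i - 1) * n + n := by
    obtain ⟨j, rfl⟩ := Nat.exists_eq_add_of_le' hi
    rw [Nat.add_sub_cancel]
    ring
  rw [hi, Function.iterate_add_apply]
  exact hZ (i - 1) (by omega)

end ProgressionCylinder

lemma measure_setOf_not_kRecurrentIn {μ : Measure (ℕ → Bool)} (hμ : IsUniformMeasure μ)
    {F : Finset (List Bool)} {σ : List Bool} (hσ : σ ∈ F) (k : ℕ) :
    μ {Z | ¬ KRecurrentIn k (openCl ↑F) Z} = 0 := by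
  obtain ⟨q, hq_pos, hq_len, hq_step⟩ : ∃ q : ℕ → ℕ,
      (∀ j, 1 ≤ q j) ∧ (∀ j, σ.length ≤ q j) ∧ ∀ j, q j + k * q j ≤ q (j + 1) :=
    ⟨fun j => (σ.length + 1) * (k + 1) ^ j, fun j => Nat.one_le_iff_ne_zero.2 (by positivity),
      fun j => by nlinarith [Nat.one_le_pow j (k + 1) k.succ_pos], fun j => le_of_eq (by ring)⟩
  have hdep j := dependsOn_mem_progressionCylinder (σ := σ) (hq_len j) k
  have hmeasure j : μ (progressionCylinder σ k (q j))ᶜ = 1 - (2⁻¹ ^ σ.length) ^ k := by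
    rw [measure_compl_of_dependsOn hμ (hdep j), measure_progressionCylinder hμ (hq_len j)]
  have hc : 1 - (2⁻¹ ^ σ.length : ℝ≥0∞) ^ k < 1 :=
    ENNReal.sub_lt_self ENNReal.one_ne_top one_ne_zero (by simp)
  have hnull := measure_iInter_preimage_shift_eq_zero hμ (fun j => dependsOn_mem_compl (hdep j))
    hq_step hc fun j => (hmeasure j).le
  refine measure_mono_null (fun Z hZ => mem_iInter.2 fun j hj => hZ ?_) hnull
  exact kRecurrentIn_of_mem_progressionCylinder hσ (hq_pos j) hj

/-- Every weakly (Kurtz) random sequence is multiply recurrent in every non-empty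
clopen subset of Cantor space. -/
theorem kurtzRandom_multiplyRecurrent_clopen (μ : Measure (ℕ → Bool))
    (hμ : IsUniformMeasure μ) (P : Set (ℕ → Bool))
    (hP : ∃ F : Finset (List Bool), P = openCl ↑F) (hPne : P.Nonempty)
    (Z : ℕ → Bool) (hZ : KurtzRandom μ Z) :
    MultiplyRecurrentIn P Z := by
  obtain ⟨F, rfl⟩ := hP
  obtain ⟨-, σ, hσ, -⟩ := hPne
  intro k _
  by_contra hk
  exact hZ _ (pi01Class_setOf_not_kRecurrentIn F k) (measure_setOf_not_kRecurrentIn hμ hσ k) hk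
end

section
/- If Z ∈ {0,1}^ℕ is Martin-Löf random, then for every Π⁰₁ class P ⊆ {0,1}^ℕ with λ(P) > 0, Z is 1-recurrent in P, i.e., there is n ≥ 1 such that T^n(Z) ∈ P. -/
open MeasureTheory

/-!
Suppose every tail `T^n Z` with `n ≥ 1` misses `P`, i.e. lies in the effectively open set
`U = ⟦S⟧`, and let `a = λ(U) < 1`. The minimal strings `τ` extending an element of `S`
enumerated at a stage `≤ |τ|` form a decidable prefix-free set `E` with `⟦E⟧ = U`, so
`a = ∑_{τ ∈ E} 2^{-|τ|}`. Reading `Z` in blocks `b τ` (one bit `b`, then `τ ∈ E`, which exists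
because the tail after the bit lies in `U`) shows that `Z` extends a concatenation of `k` blocks
for every `k`, and these concatenations cover a set of measure at most `a^k`. With `a^N ≤ 1/2`
the levels `k = N m` form a Martin-Löf test that `Z` does not pass.
-/

open scoped ENNReal

namespace CantorSpace

section Computability

open Nat.Partrec (Code)

/-- Dovetailing: stage `⟨n, k⟩` runs the computation of `f n` for `k` steps. -/
theorem _root_.Computable.exists_primrec_enum {α : Type*} [Primcodable α] {f : ℕ → Option α}
    (hf : Computable f) :
    ∃ g : ℕ → Option α, Primrec g ∧ ∀ x, (∃ n, g n = some x) ↔ ∃ n, f n = some x := by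
  obtain ⟨c, hc⟩ : ∃ c : Code, c.eval = fun n => Part.some (Encodable.encode (f n)) :=
    Code.exists_code.1 <| Nat.Partrec.of_eq hf fun n => by simp [Encodable.decode]
  refine ⟨fun p => ((c.evaln p.unpair.2 p.unpair.1).bind
    (Encodable.decode (α := Option α))).bind id, ?_, fun x => ⟨?_, ?_⟩⟩
  · refine Primrec.option_bind (Primrec.option_bind ?_ (Primrec.decode.comp Primrec.snd).to₂)
      Primrec.snd.to₂
    exact Code.primrec_evaln.comp
      (((Primrec.snd.comp Primrec.unpair).pair (Primrec.const c)).pair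
        (Primrec.fst.comp Primrec.unpair))
  · rintro ⟨p, hp⟩
    obtain ⟨o, ⟨e, he, hd⟩, rfl⟩ := by simpa only [Option.bind_eq_some_iff] using hp
    have : e = Encodable.encode (f p.unpair.1) := by
      simpa [hc] using Code.evaln_sound he
    subst this
    rw [Encodable.encodek] at hd
    exact ⟨p.unpair.1, Option.some_injective _ hd ▸ rfl⟩
  · rintro ⟨n, hn⟩
    obtain ⟨k, hk⟩ :=
      Code.evaln_complete.1 (show Encodable.encode (f n) ∈ c.eval n by simp [hc])
    exact ⟨Nat.pair n k, by simp_all [Option.mem_def, Encodable.encodek]⟩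

end Computability

section Prefixes

theorem shift_iterate_apply (n : ℕ) (Z : ℕ → Bool) (i : ℕ) : shift^[n] Z i = Z (n + i) := by
  induction n generalizing Z with
  | zero => simp
  | succ n ih =>
    rw [Function.iterate_succ_apply, ih]
    exact congrArg Z (by omega)

variable {σ τ ρ : List Bool} {Z : ℕ → Bool}

theorem isPrefixOf_ofFn (n : ℕ) (Z : ℕ → Bool) :
    IsPrefixOf (List.ofFn fun i : Fin n => Z i) Z := by
  intro i hi
  simp_all

theorem IsPrefixOf.of_prefix (hτ : IsPrefixOf τ Z) (h : σ <+: τ) : IsPrefixOf σ Z := by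
  obtain ⟨ρ, rfl⟩ := h
  intro i hi
  rw [← hτ i (by simp; omega), List.getD_append _ _ _ _ hi]

theorem IsPrefixOf.prefix_of_length_le (hσ : IsPrefixOf σ Z) (hτ : IsPrefixOf τ Z)
    (h : σ.length ≤ τ.length) : σ <+: τ := by
  refine List.prefix_iff_eq_take.2 (List.ext_getElem (by simp [h]) fun i h₁ h₂ => ?_)
  rw [List.getElem_take, ← List.getD_eq_getElem _ false, ← List.getD_eq_getElem _ false,
    hσ i h₁, hτ i (h₁.trans_le h)]

theorem IsPrefixOf.append (hτ : IsPrefixOf τ Z) (hρ : IsPrefixOf ρ (shift^[τ.length] Z)) :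
    IsPrefixOf (τ ++ ρ) Z := by
  intro i hi
  rw [List.length_append] at hi
  by_cases h : i < τ.length
  · rw [List.getD_append _ _ _ _ h, hτ i h]
  · rw [List.getD_append_right _ _ _ _ (not_lt.1 h), hρ _ (by omega), shift_iterate_apply]
    exact congrArg Z (by omega)

theorem IsPrefixOf.cons_of_shift {t : ℕ} (h : IsPrefixOf σ (shift^[t + 1] Z)) :
    IsPrefixOf (Z t :: σ) (shift^[t] Z) := by
  refine IsPrefixOf.append (τ := [Z t]) (fun i hi => ?_) ?_
  · simp_all [shift_iterate_apply]
  · rwa [← Function.iterate_add_apply, add_comm]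

theorem _root_.Primrec.list_isPrefix {α : Type*} [Primcodable α] [DecidableEq α] :
    PrimrecRel fun σ τ : List α => σ <+: τ :=
  (Primrec.eq.comp (Primrec.list_take.comp (Primrec.list_length.comp Primrec.fst) Primrec.snd)
    Primrec.fst).of_eq fun p => by rw [eq_comm, ← List.prefix_iff_eq_take]

end Prefixes

def enumRange {α : Type*} (e : α → Option (List Bool)) : Set (List Bool) :=
  {σ | ∃ a, e a = some σ}

def IsPrefixFreeEnum {α : Type*} (e : α → Option (List Bool)) : Prop :=
  ∀ a b σ τ, a ≠ b → e a = some σ → e b = some τ → ¬ σ <+: τ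

section MinimalCover

variable (g : ℕ → Option (List Bool))

/-- The bound `m ≤ |τ|` makes this decidable, and primitive recursive when `g` is. -/
def Covers (τ : List Bool) : Prop :=
  ∃ m ≤ τ.length, ∃ σ ∈ g m, σ <+: τ

def IsMinimalCover (τ : List Bool) : Prop :=
  Covers g τ ∧ ∀ i < τ.length, ¬ Covers g (τ.take i)

instance : DecidablePred (Covers g) := fun τ =>
  inferInstanceAs (Decidable (∃ m ≤ τ.length, ∃ σ ∈ g m, σ <+: τ))

instance : DecidablePred (IsMinimalCover g) := fun τ =>
  inferInstanceAs (Decidable (Covers g τ ∧ ∀ i < τ.length, ¬ Covers g (τ.take i)))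

def minimalCovers (τ : List Bool) : Option (List Bool) :=
  if IsMinimalCover g τ then some τ else none

variable {g}

theorem minimalCovers_eq_some {τ σ : List Bool} :
    minimalCovers g τ = some σ ↔ IsMinimalCover g τ ∧ τ = σ := by
  unfold minimalCovers
  split_ifs with h <;> simp [h]

theorem isPrefixFreeEnum_minimalCovers : IsPrefixFreeEnum (minimalCovers g) := by
  intro τ₁ τ₂ σ₁ σ₂ hne h₁ h₂ hpre
  obtain ⟨⟨hcov, -⟩, rfl⟩ := minimalCovers_eq_some.1 h₁
  obtain ⟨⟨-, hmin⟩, rfl⟩ := minimalCovers_eq_some.1 h₂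
  have hlt : τ₁.length < τ₂.length :=
    hpre.length_le.lt_of_ne fun h => hne (hpre.eq_of_length h)
  exact hmin _ hlt (List.prefix_iff_eq_take.1 hpre ▸ hcov)

theorem exists_isMinimalCover_prefix {τ : List Bool} (h : Covers g τ) :
    ∃ i ≤ τ.length, IsMinimalCover g (τ.take i) := by
  have hex : ∃ i, Covers g (τ.take i) := ⟨τ.length, by rwa [List.take_length]⟩
  refine ⟨Nat.find hex, Nat.find_min' hex (by rwa [List.take_length]), Nat.find_spec hex,
    fun j hj => ?_⟩
  have hj' : j < Nat.find hex := hj.trans_le (by simp)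
  rw [List.take_take, min_eq_left hj'.le]
  exact Nat.find_min hex hj'

theorem openCl_enumRange_minimalCovers :
    openCl (enumRange (minimalCovers g)) = openCl (enumRange g) := by
  ext Z
  constructor
  · rintro ⟨τ, ⟨τ', hτ'⟩, hZ⟩
    obtain ⟨⟨⟨m, -, σ, hσ, hpre⟩, -⟩, rfl⟩ := minimalCovers_eq_some.1 hτ'
    exact ⟨σ, ⟨m, hσ⟩, IsPrefixOf.of_prefix hZ hpre⟩
  · rintro ⟨σ, ⟨m, hm⟩, hZ⟩
    set τ := List.ofFn fun i : Fin (max m σ.length) => Z i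
    have hτ : IsPrefixOf τ Z := isPrefixOf_ofFn _ Z
    have hcov : Covers g τ :=
      ⟨m, by simp [τ], σ, hm, IsPrefixOf.prefix_of_length_le hZ hτ (by simp [τ])⟩
    obtain ⟨i, -, hi⟩ := exists_isMinimalCover_prefix hcov
    exact ⟨τ.take i, ⟨_, minimalCovers_eq_some.2 ⟨hi, rfl⟩⟩,
      IsPrefixOf.of_prefix hτ (List.take_prefix i τ)⟩

theorem primrec_minimalCovers (hg : Primrec g) : Primrec (minimalCovers g) := by
  have hstage : PrimrecRel fun (m : ℕ) (τ : List Bool) => ∃ σ ∈ g m, σ <+: τ :=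
    Primrec.primrecPred <| (Primrec.option_casesOn (hg.comp Primrec.fst) (Primrec.const false)
      (Primrec.list_isPrefix.decide.comp Primrec.snd (Primrec.snd.comp Primrec.fst)).to₂).of_eq
      fun p => Bool.eq_iff_iff.2 <| by
        rw [decide_eq_true_iff]
        rcases h : g p.1 <;> simp [h]
  have hcovers : PrimrecPred (Covers g) :=
    (hstage.exists_mem_list.comp
      (Primrec.list_range.comp (Primrec.succ.comp Primrec.list_length)) Primrec.id).of_eq
      fun τ => by simp [Covers]
  have hnotCovers : PrimrecRel fun (i : ℕ) (τ : List Bool) => ¬ Covers g (τ.take i) :=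
    (hcovers.comp (Primrec.list_take.comp Primrec.fst Primrec.snd)).not
  have hminimal : PrimrecPred (IsMinimalCover g) :=
    hcovers.and <| (hnotCovers.forall_mem_list.comp
      (Primrec.list_range.comp Primrec.list_length) Primrec.id).of_eq fun τ => by simp
  exact Primrec.ite hminimal Primrec.option_some (Primrec.const none)

end MinimalCover

section Measure

noncomputable def mass : Option (List Bool) → ℝ≥0∞
  | none => 0
  | some σ => 2⁻¹ ^ σ.length

def cylinderOf : Option (List Bool) → Set (ℕ → Bool)
  | none => ∅
  | some σ => {Z | IsPrefixOf σ Z}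

theorem measurableSet_cylinder (σ : List Bool) :
    MeasurableSet {Z : ℕ → Bool | IsPrefixOf σ Z} := by
  have : {Z : ℕ → Bool | IsPrefixOf σ Z} =
      ⋂ i ∈ Finset.range σ.length, {Z | σ.getD i false = Z i} := by
    ext Z
    simp [IsPrefixOf]
  rw [this]
  exact Finset.measurableSet_biInter _ fun i _ =>
    measurableSet_eq_fun measurable_const (measurable_pi_apply i)

theorem measurableSet_openCl (S : Set (List Bool)) : MeasurableSet (openCl S) := by
  have : openCl S = ⋃ σ ∈ S, {Z | IsPrefixOf σ Z} := by
    ext Z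
    simp [openCl]
  rw [this]
  exact MeasurableSet.biUnion S.to_countable fun σ _ => measurableSet_cylinder σ

theorem measurableSet_cylinderOf : ∀ o, MeasurableSet (cylinderOf o)
  | none => MeasurableSet.empty
  | some σ => measurableSet_cylinder σ

theorem openCl_enumRange {α : Type*} (e : α → Option (List Bool)) :
    openCl (enumRange e) = ⋃ a, cylinderOf (e a) := by
  ext Z
  simp only [openCl, enumRange, Set.mem_iUnion]
  constructor
  · rintro ⟨σ, ⟨a, ha⟩, hZ⟩
    exact ⟨a, by rwa [ha]⟩
  · rintro ⟨a, hZ⟩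
    rcases ha : e a with _ | σ <;> rw [ha] at hZ
    · exact hZ.elim
    · exact ⟨σ, ⟨a, ha⟩, hZ⟩

variable {μ : Measure (ℕ → Bool)}

theorem isProbabilityMeasure_of_isUniformMeasure (hμ : IsUniformMeasure μ) :
    IsProbabilityMeasure μ :=
  ⟨by simpa [IsPrefixOf] using hμ []⟩

theorem measure_cylinderOf (hμ : IsUniformMeasure μ) : ∀ o, μ (cylinderOf o) = mass o
  | none => measure_empty
  | some σ => hμ σ

theorem measure_openCl_enumRange_le {α : Type*} [Countable α] (hμ : IsUniformMeasure μ)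
    (e : α → Option (List Bool)) : μ (openCl (enumRange e)) ≤ ∑' a, mass (e a) := by
  rw [openCl_enumRange]
  exact (measure_iUnion_le _).trans_eq (tsum_congr fun a => measure_cylinderOf hμ _)

theorem measure_openCl_enumRange_eq {α : Type*} [Countable α] (hμ : IsUniformMeasure μ)
    {e : α → Option (List Bool)} (he : IsPrefixFreeEnum e) :
    μ (openCl (enumRange e)) = ∑' a, mass (e a) := by
  rw [openCl_enumRange, measure_iUnion _ fun a => measurableSet_cylinderOf _]
  · exact tsum_congr fun a => measure_cylinderOf hμ _
  intro a b hab
  rcases ha : e a with _ | σ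
  · simp [Function.onFun, cylinderOf, ha]
  rcases hb : e b with _ | τ
  · simp [Function.onFun, cylinderOf, hb]
  simp only [Function.onFun, cylinderOf, ha, hb]
  refine Set.disjoint_left.2 fun Z hσ hτ => ?_
  rcases le_total σ.length τ.length with h | h
  · exact he a b σ τ hab ha hb (IsPrefixOf.prefix_of_length_le hσ hτ h)
  · exact he b a τ σ hab.symm hb ha (IsPrefixOf.prefix_of_length_le hτ hσ h)

end Measure

section Concatenation

variable {α : Type*}

def consEnum (e : α → Option (List Bool)) (p : Bool × α) : Option (List Bool) :=
  (e p.2).map (p.1 :: ·)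

def concatEnum (e : α → Option (List Bool)) (k : ℕ) (l : List α) : Option (List Bool) :=
  if l.length = k then (l.mapM e).map List.flatten else none

theorem cons_mem_enumRange_consEnum {e : α → Option (List Bool)} (b : Bool) {σ : List Bool}
    (h : σ ∈ enumRange e) : b :: σ ∈ enumRange (consEnum e) := by
  obtain ⟨a, ha⟩ := h
  exact ⟨(b, a), by simp [consEnum, ha]⟩

theorem flatten_mem_enumRange_concatEnum {e : α → Option (List Bool)} :
    ∀ {L : List (List Bool)}, (∀ σ ∈ L, σ ∈ enumRange e) →
      L.flatten ∈ enumRange (concatEnum e L.length)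
  | [], _ => ⟨[], rfl⟩
  | σ :: L, h => by
    obtain ⟨a, ha⟩ := h σ List.mem_cons_self
    obtain ⟨l, hl⟩ :=
      flatten_mem_enumRange_concatEnum fun τ hτ => h τ (List.mem_cons_of_mem σ hτ)
    unfold concatEnum at hl
    split_ifs at hl with hlen
    obtain ⟨L', hL', hflat⟩ := Option.map_eq_some_iff.1 hl
    exact ⟨a :: l, by simp [concatEnum, hlen, ha, hL', hflat]⟩

theorem mass_map_cons (b : Bool) (o : Option (List Bool)) :
    mass (o.map (b :: ·)) = 2⁻¹ * mass o := by
  cases o <;> simp [mass, pow_succ, mul_comm]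

theorem tsum_mass_consEnum (e : α → Option (List Bool)) :
    ∑' p, mass (consEnum e p) = ∑' a, mass (e a) := by
  simp only [consEnum, ENNReal.tsum_prod', tsum_fintype, Fintype.sum_bool, mass_map_cons,
    ENNReal.tsum_mul_left]
  rw [mul_add, ← add_mul, ENNReal.inv_two_add_inv_two, one_mul]

theorem mass_mapM_flatten (e : α → Option (List Bool)) (l : List α) :
    mass ((l.mapM e).map List.flatten) = (l.map fun a => mass (e a)).prod := by
  induction l with
  | nil => simp [mass]
  | cons a l ih =>
    rw [List.mapM_cons, List.map_cons, List.prod_cons, ← ih]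
    rcases e a with _ | σ
    · simp [mass]
    rcases l.mapM e with _ | L
    · simp [mass]
    · simp [mass, pow_add]

theorem _root_.ENNReal.tsum_ite_length_eq_prod (f : α → ℝ≥0∞) (k : ℕ) :
    ∑' l : List α, (if l.length = k then (l.map f).prod else 0) = (∑' a, f a) ^ k := by
  induction k with
  | zero =>
    rw [tsum_eq_single [] fun l hl => if_neg (by simpa using hl)]
    simp
  | succ k ih =>
    have hsupp :
        Function.support (fun l : List α => if l.length = k + 1 then (l.map f).prod else 0) ⊆
          Set.range fun p : α × List α => p.1 :: p.2 := by
      rintro (_ | ⟨a, l⟩) hl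
      · simp at hl
      · exact ⟨(a, l), rfl⟩
    have hinj : Function.Injective fun p : α × List α => p.1 :: p.2 :=
      fun p q h => Prod.ext (List.cons.inj h).1 (List.cons.inj h).2
    rw [← hinj.tsum_eq hsupp, ENNReal.tsum_prod', pow_succ', ← ENNReal.tsum_mul_right, ← ih]
    refine tsum_congr fun a => ?_
    rw [← ENNReal.tsum_mul_left]
    refine tsum_congr fun l => ?_
    simp only [List.length_cons, add_left_inj, List.map_cons, List.prod_cons]
    split_ifs <;> simp

theorem tsum_mass_concatEnum (e : α → Option (List Bool)) (k : ℕ) :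
    ∑' l, mass (concatEnum e k l) = (∑' a, mass (e a)) ^ k := by
  rw [← ENNReal.tsum_ite_length_eq_prod]
  refine tsum_congr fun l => ?_
  unfold concatEnum
  split_ifs
  · exact mass_mapM_flatten e l
  · rfl

theorem _root_.Primrec.list_mapM_option {β γ : Type*} [Primcodable α] [Primcodable β]
    [Primcodable γ] {f : α → List β} {g : α → β → Option γ} (hf : Primrec f) (hg : Primrec₂ g) :
    Primrec fun a => (f a).mapM (g a) := by
  have hstep : Primrec₂ fun a (p : β × Option (List γ)) =>
      (g a p.1).bind fun x => p.2.map (x :: ·) :=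
    Primrec.option_bind (hg.comp Primrec.fst (Primrec.fst.comp Primrec.snd))
      (Primrec.option_map (Primrec.snd.comp (Primrec.snd.comp Primrec.fst))
        (Primrec.list_cons.comp (Primrec.snd.comp Primrec.fst) Primrec.snd).to₂).to₂
  refine (Primrec.list_foldr hf (Primrec.const (some [])) hstep).of_eq fun a => ?_
  induction f a with
  | nil => rfl
  | cons b l ih =>
    rw [List.foldr_cons, ih, List.mapM_cons]
    cases g a b <;> cases List.mapM (g a) l <;> rfl

variable [Primcodable α] {e : α → Option (List Bool)}

theorem primrec_consEnum (he : Primrec e) : Primrec (consEnum e) :=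
  Primrec.option_map (he.comp Primrec.snd)
    (Primrec.list_cons.comp (Primrec.fst.comp Primrec.fst) Primrec.snd).to₂

theorem primrec_concatEnum (he : Primrec e) : Primrec₂ (concatEnum e) :=
  Primrec.ite (Primrec.eq.comp (Primrec.list_length.comp Primrec.snd) Primrec.fst)
    (Primrec.option_map (Primrec.list_mapM_option Primrec.snd (he.comp Primrec.snd).to₂)
      (Primrec.list_flatten.comp Primrec.snd).to₂)
    (Primrec.const none)

theorem uniformlyCE_enumRange {f : ℕ → α → Option (List Bool)} (hf : Primrec₂ f) :
    UniformlyCE fun m => enumRange (f m) := by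
  refine ⟨fun m n => (Encodable.decode n).bind (f m), ?_, fun m => Set.ext fun σ => ⟨?_, ?_⟩⟩
  · exact (Primrec.option_bind (Primrec.decode.comp Primrec.snd)
      (hf.comp (Primrec.fst.comp Primrec.fst) Primrec.snd).to₂).to_comp
  · rintro ⟨a, ha⟩
    exact ⟨Encodable.encode a, by simpa using ha⟩
  · rintro ⟨n, hn⟩
    obtain ⟨a, -, ha⟩ := Option.bind_eq_some_iff.1 hn
    exact ⟨a, ha⟩

end Concatenation

section Recurrence

variable {α : Type*} {e : α → Option (List Bool)} {Z : ℕ → Bool}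

theorem exists_blocks_isPrefixOf (hZ : ∀ n, 1 ≤ n → shift^[n] Z ∈ openCl (enumRange e)) :
    ∀ k, ∃ L : List (List Bool), L.length = k ∧ (∀ σ ∈ L, σ ∈ enumRange (consEnum e)) ∧
      IsPrefixOf L.flatten Z
  | 0 => ⟨[], rfl, by simp, by simp [IsPrefixOf]⟩
  | k + 1 => by
    obtain ⟨L, hlen, hblocks, hpre⟩ := exists_blocks_isPrefixOf hZ k
    obtain ⟨σ, hσ, hσZ⟩ := hZ (L.flatten.length + 1) (Nat.le_add_left 1 _)
    refine ⟨L ++ [Z L.flatten.length :: σ], by simp [hlen], ?_, ?_⟩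
    · intro τ hτ
      rcases List.mem_append.1 hτ with hτ | hτ
      · exact hblocks τ hτ
      · rw [List.mem_singleton.1 hτ]
        exact cons_mem_enumRange_consEnum _ hσ
    · simpa using IsPrefixOf.append hpre (IsPrefixOf.cons_of_shift hσZ)

theorem mem_openCl_concatEnum_consEnum
    (hZ : ∀ n, 1 ≤ n → shift^[n] Z ∈ openCl (enumRange e)) (k : ℕ) :
    Z ∈ openCl (enumRange (concatEnum (consEnum e) k)) := by
  obtain ⟨L, rfl, hblocks, hpre⟩ := exists_blocks_isPrefixOf hZ k
  exact ⟨_, flatten_mem_enumRange_concatEnum hblocks, hpre⟩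

theorem not_mlRandom_of_forall_shift_mem [Primcodable α] {μ : Measure (ℕ → Bool)}
    (hμ : IsUniformMeasure μ) (he : Primrec e) (hfree : IsPrefixFreeEnum e)
    (hlt : μ (openCl (enumRange e)) < 1)
    (hZ : ∀ n, 1 ≤ n → shift^[n] Z ∈ openCl (enumRange e)) : ¬ MLRandom μ Z := by
  rw [measure_openCl_enumRange_eq hμ hfree] at hlt
  obtain ⟨N, hN⟩ : ∃ N, (∑' a, mass (e a)) ^ N ≤ 2⁻¹ :=
    ((ENNReal.tendsto_pow_atTop_nhds_zero_of_lt_one hlt).eventually_le_const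
      (by norm_num)).exists
  have htest : MLTest μ fun m => enumRange (concatEnum (consEnum e) (N * m)) := by
    refine ⟨uniformlyCE_enumRange ((primrec_concatEnum (primrec_consEnum he)).comp
      (Primrec.nat_mul.comp (Primrec.const N) Primrec.fst) Primrec.snd), fun m => ?_⟩
    calc μ (openCl (enumRange (concatEnum (consEnum e) (N * m))))
        ≤ ∑' l, mass (concatEnum (consEnum e) (N * m) l) :=
          measure_openCl_enumRange_le hμ _
      _ = ((∑' a, mass (e a)) ^ N) ^ m := by
          rw [tsum_mass_concatEnum, tsum_mass_consEnum, pow_mul]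
      _ ≤ 2⁻¹ ^ m := pow_le_pow_left' hN m
  intro hrand
  obtain ⟨m, hm⟩ := hrand _ htest
  exact hm (mem_openCl_concatEnum_consEnum hZ _)

end Recurrence

end CantorSpace

open CantorSpace in
/-- Kučera's theorem, one direction: a Martin-Löf random sequence is `1`-recurrent in
every Π⁰₁ class of positive measure. -/
theorem mlRandom_oneRecurrent (μ : Measure (ℕ → Bool)) (hμ : IsUniformMeasure μ)
    (Z : ℕ → Bool) (hZ : MLRandom μ Z) :
    ∀ P : Set (ℕ → Bool), Pi01Class P → 0 < μ P →
      ∃ n : ℕ, 1 ≤ n ∧ shift^[n] Z ∈ P := by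
  rintro P ⟨S, ⟨f, hf, rfl⟩, rfl⟩ hpos
  by_contra! htails
  obtain ⟨g, hg, hgf⟩ := hf.exists_primrec_enum
  have hU : openCl (enumRange (minimalCovers g)) = openCl {σ | ∃ n, f n = some σ} := by
    rw [openCl_enumRange_minimalCovers]
    exact congrArg openCl (Set.ext hgf)
  have := isProbabilityMeasure_of_isUniformMeasure hμ
  rw [prob_compl_eq_one_sub (measurableSet_openCl _), tsub_pos_iff_lt] at hpos
  refine not_mlRandom_of_forall_shift_mem hμ (primrec_minimalCovers hg)
    isPrefixFreeEnum_minimalCovers (hU ▸ hpos) (fun n hn => ?_) hZ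
  simpa [hU] using htails n hn
end

section
/- Fix k ≥ 1 and let X_k = {0,1}^(ℕ^k) with the k commuting shift operators T₁, …, T_k. Let P ⊆ X_k be a non-empty clopen set. Then every weakly (Kurtz) random Z ∈ X_k is multiply recurrent in P, i.e., there is n ≥ 1 with Z ∈ ⋂_{1≤i≤k} T_i^{-n}(P). -/
open MeasureTheory

/-- The `i`-th shift operator on `X_k = {0,1}^(ℕ^k)`:
`T_i Z (u₁,…,u_k) = Z (u₁,…,u_i + 1,…,u_k)`. -/
def shiftK {k : ℕ} (i : Fin k) (Z : (Fin k → ℕ) → Bool) : (Fin k → ℕ) → Bool :=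
  fun u => Z (fun j => if j = i then u j + 1 else u j)

/-- The array of size `n` coded by `(n, l)` (the list `l` records the `n ^ k` values of a
map `{0,…,n-1}^k → {0,1}` in the order given by `finFunctionFinEquiv`) agrees with `Z`
on its domain. -/
def ArrayAgrees {k : ℕ} (n : ℕ) (l : List Bool) (Z : (Fin k → ℕ) → Bool) : Prop :=
  l.length = n ^ k ∧
    ∀ u : Fin k → Fin n, l.getD (finFunctionFinEquiv u : ℕ) false = Z (fun j => (u j : ℕ))

/-- The open subset `⟦S⟧` of `X_k` generated by a set `S` of coded arrays. -/
def openClK {k : ℕ} (S : Set (ℕ × List Bool)) : Set ((Fin k → ℕ) → Bool) :=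
  {Z | ∃ p ∈ S, ArrayAgrees p.1 p.2 Z}

/-- A set of coded arrays is computably enumerable. -/
def CEArrays (S : Set (ℕ × List Bool)) : Prop :=
  ∃ f : ℕ → Option (ℕ × List Bool), Computable f ∧ S = {σ | ∃ n, f n = some σ}

/-- A Π⁰₁ class in `X_k`: the complement of the open set generated by a c.e. set of
arrays. -/
def Pi01ClassK {k : ℕ} (P : Set ((Fin k → ℕ) → Bool)) : Prop :=
  ∃ S : Set (ℕ × List Bool), CEArrays S ∧ P = (openClK S)ᶜ

/-- `μ` is the uniform (fair-coin) product measure on `X_k`: the cylinder determined by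
an array of size `n` has measure `2^{-n^k}`. -/
def IsUniformMeasureK {k : ℕ} (μ : MeasureTheory.Measure ((Fin k → ℕ) → Bool)) : Prop :=
  ∀ (n : ℕ) (l : List Bool), l.length = n ^ k →
    μ {Z | ArrayAgrees n l Z} = 2⁻¹ ^ (n ^ k)

/-- `Z` is multiply recurrent in `P ⊆ X_k`: there is `n ≥ 1` with
`Z ∈ ⋂_{1 ≤ i ≤ k} T_i^{-n} P`. -/
def MultiplyRecurrentK {k : ℕ} (P : Set ((Fin k → ℕ) → Bool))
    (Z : (Fin k → ℕ) → Bool) : Prop :=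
  ∃ n : ℕ, 1 ≤ n ∧ Z ∈ ⋂ i : Fin k, (shiftK i)^[n] ⁻¹' P

/-- `Z ∈ X_k` is weakly (Kurtz) random w.r.t. `μ`: it belongs to no Π⁰₁ class of
measure `0`. -/
def KurtzRandomK {k : ℕ} (μ : MeasureTheory.Measure ((Fin k → ℕ) → Bool))
    (Z : (Fin k → ℕ) → Bool) : Prop :=
  ∀ P : Set ((Fin k → ℕ) → Bool), Pi01ClassK P → μ P = 0 → Z ∉ P

/-!
Pick a cylinder `⟦(m, w)⟧ ⊆ P`. The finite arrays containing, for one `n ≥ 1`, a copy of `w`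
translated by `n` along every axis form a decidable set `S`, and every point of `⟦S⟧` is multiply
recurrent in `P`; so the complement of `⟦S⟧` is a Π⁰₁ class that must be shown null. In the box of
size `(m + 1)(t + 1)` the translates by `n = (m + 1)(s + 1)`, `s < t`, occupy `t` pairwise disjoint
sets of `k·m^k` cells, and a point outside `⟦S⟧` misses the pattern on each of them, which has
probability at most `(1 - 2^{-k·m^k})^t`. A Kurtz random point therefore lies in `⟦S⟧`.
-/

open scoped ENNReal

section Arrays

variable {k : ℕ}

def arrayIndex (N : ℕ) (v : Fin k → ℕ) : ℕ := ∑ j, v j * N ^ (j : ℕ)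

theorem finFunctionFinEquiv_val_eq_arrayIndex {N : ℕ} (v : Fin k → Fin N) :
    (finFunctionFinEquiv v : ℕ) = arrayIndex N (fun j => v j) :=
  finFunctionFinEquiv_apply v

theorem arrayIndex_add_single (N : ℕ) (v : Fin k → ℕ) (i : Fin k) (n : ℕ) :
    arrayIndex N (v + Pi.single i n) = arrayIndex N v + n * N ^ (i : ℕ) := by
  simp [arrayIndex, add_mul, Finset.sum_add_distrib, Pi.single_apply]

theorem arrayIndex_eq_ofDigits (N : ℕ) (v : Fin k → ℕ) :
    arrayIndex N v = Nat.ofDigits N (List.ofFn v) := by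
  simp [arrayIndex, Nat.ofDigits_eq_sum_mapIdx, List.mapIdx_eq_ofFn, List.sum_ofFn]

theorem getD_eq_of_arrayAgrees {N : ℕ} {l : List Bool} {Z : (Fin k → ℕ) → Bool}
    (h : ArrayAgrees N l Z) {v : Fin k → ℕ} (hv : ∀ j, v j < N) :
    l.getD (arrayIndex N v) false = Z v := by
  have := h.2 fun j => ⟨v j, hv j⟩
  rwa [finFunctionFinEquiv_val_eq_arrayIndex] at this

theorem shiftK_iterate_apply (i : Fin k) (n : ℕ) (Z : (Fin k → ℕ) → Bool) (v : Fin k → ℕ) :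
    (shiftK i)^[n] Z v = Z (v + Pi.single i n) := by
  induction n generalizing Z with
  | zero => simp
  | succ n ih =>
    rw [Function.iterate_succ_apply, ih, shiftK]
    congr 1
    ext j
    by_cases h : j = i <;> simp [h]
    omega

theorem arrayAgrees_iterate_shiftK_iff {m : ℕ} {w : List Bool} (hw : w.length = m ^ k)
    (i : Fin k) (n : ℕ) (Z : (Fin k → ℕ) → Bool) :
    ArrayAgrees m w ((shiftK i)^[n] Z) ↔ ∀ u : Fin k → Fin m,
      w.getD (arrayIndex m fun j => u j) false = Z ((fun j => (u j : ℕ)) + Pi.single i n) := by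
  simp only [ArrayAgrees, hw, true_and, finFunctionFinEquiv_val_eq_arrayIndex,
    shiftK_iterate_apply]

end Arrays

section Witnesses

variable {k m : ℕ} {w : List Bool}

/-- `⟦recurrenceWitnesses k m w⟧` is the set of `Z` with `T_i^n Z ∈ ⟦(m, w)⟧` for all `i` and a
common `n ≥ 1` (`mem_recurrenceWitnesses_iff`); membership is checked on a finite array. -/
def recurrenceWitnesses (k m : ℕ) (w : List Bool) : Set (ℕ × List Bool) :=
  {p | p.2.length = p.1 ^ k ∧ ∃ n, 1 ≤ n ∧ n + m ≤ p.1 ∧ ∀ (i : Fin k) (u : Fin k → Fin m),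
    p.2.getD (arrayIndex p.1 ((fun j => (u j : ℕ)) + Pi.single i n)) false =
      w.getD (arrayIndex m fun j => u j) false}

theorem mem_recurrenceWitnesses_iff (hw : w.length = m ^ k) {N : ℕ} {l : List Bool}
    {Z : (Fin k → ℕ) → Bool} (hl : ArrayAgrees N l Z) :
    (N, l) ∈ recurrenceWitnesses k m w ↔
      ∃ n, 1 ≤ n ∧ n + m ≤ N ∧ ∀ i, ArrayAgrees m w ((shiftK i)^[n] Z) := by
  have hread : ∀ n, n + m ≤ N → ∀ (i : Fin k) (u : Fin k → Fin m),
      l.getD (arrayIndex N ((fun j => (u j : ℕ)) + Pi.single i n)) false =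
        Z ((fun j => (u j : ℕ)) + Pi.single i n) := fun n hn i u =>
    getD_eq_of_arrayAgrees hl fun j => by
      have := (u j).isLt
      by_cases h : j = i <;> simp [h] <;> omega
  simp only [recurrenceWitnesses, Set.mem_ofPred_eq, hl.1, true_and,
    arrayAgrees_iterate_shiftK_iff hw]
  refine exists_congr fun n => and_congr_right fun _ => and_congr_right fun hn => ?_
  simp only [hread n hn, eq_comm]

theorem multiplyRecurrentK_of_mem_openClK {F : Set (ℕ × List Bool)} (hF : (m, w) ∈ F)
    (hw : w.length = m ^ k) {Z : (Fin k → ℕ) → Bool}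
    (hZ : Z ∈ openClK (recurrenceWitnesses k m w)) : MultiplyRecurrentK (openClK F) Z := by
  obtain ⟨⟨N, l⟩, hp, hl⟩ := hZ
  obtain ⟨n, hn, -, hrec⟩ := (mem_recurrenceWitnesses_iff hw hl).1 hp
  exact ⟨n, hn, Set.mem_iInter.2 fun i => ⟨(m, w), hF, hrec i⟩⟩

end Witnesses

theorem Primrec.nat_pow : Primrec₂ ((· ^ ·) : ℕ → ℕ → ℕ) :=
  Primrec₂.unpaired'.1 Nat.Primrec.pow

theorem Primrec.nat_ofDigits : Primrec₂ (Nat.ofDigits : ℕ → List ℕ → ℕ) := by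
  refine (Primrec.list_foldr Primrec.snd (Primrec.const 0)
    (Primrec.nat_add.comp (Primrec.fst.comp Primrec.snd)
      (Primrec.nat_mul.comp (Primrec.fst.comp Primrec.fst)
        (Primrec.snd.comp Primrec.snd))).to₂).of_eq fun p => ?_
  simp [Nat.ofDigits_eq_foldr]

theorem primrec₂_arrayIndex_of_finite {α : Type*} [Primcodable α] [Finite α] {k : ℕ}
    (v : α → Fin k → ℕ) : Primrec₂ fun N x => arrayIndex N (v x) :=
  (Primrec.nat_ofDigits.comp Primrec.fst
    ((Primrec.dom_finite fun x => List.ofFn (v x)).comp Primrec.snd)).of_eq fun p =>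
      (arrayIndex_eq_ofDigits p.1 (v p.2)).symm

theorem primrecPred_mem_recurrenceWitnesses (k m : ℕ) (w : List Bool) :
    PrimrecPred (· ∈ recurrenceWitnesses k m w) := by
  let cells := (Finset.univ : Finset (Fin k × (Fin k → Fin m))).toList
  let pattern : Fin k × (Fin k → Fin m) → Bool :=
    fun x => w.getD (arrayIndex m fun j => x.2 j) false
  have hcell : PrimrecRel fun (x : Fin k × (Fin k → Fin m)) (q : (ℕ × List Bool) × ℕ) =>
      q.1.2.getD (arrayIndex q.1.1 (fun j => x.2 j) + q.2 * q.1.1 ^ (x.1 : ℕ)) false =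
        pattern x :=
    Primrec.eq.comp
      ((Primrec.list_getD false).comp (Primrec.snd.comp (Primrec.fst.comp Primrec.snd))
        (Primrec.nat_add.comp
          ((primrec₂_arrayIndex_of_finite
            fun (x : Fin k × (Fin k → Fin m)) (j : Fin k) => (x.2 j : ℕ)).comp
            (Primrec.fst.comp (Primrec.fst.comp Primrec.snd)) Primrec.fst)
          (Primrec.nat_mul.comp (Primrec.snd.comp Primrec.snd)
            (Primrec.nat_pow.comp (Primrec.fst.comp (Primrec.fst.comp Primrec.snd))
              ((Primrec.dom_finite fun x : Fin k × (Fin k → Fin m) => (x.1 : ℕ)).comp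
                Primrec.fst)))))
      ((Primrec.dom_finite pattern).comp Primrec.fst)
  have hshift : PrimrecRel fun (n : ℕ) (p : ℕ × List Bool) =>
      1 ≤ n ∧ n + m ≤ p.1 ∧ ∀ x ∈ cells,
        p.2.getD (arrayIndex p.1 (fun j => x.2 j) + n * p.1 ^ (x.1 : ℕ)) false = pattern x :=
    (Primrec.nat_le.comp (Primrec.const 1) Primrec.fst).and
      ((Primrec.nat_le.comp (Primrec.nat_add.comp Primrec.fst (Primrec.const m))
        (Primrec.fst.comp Primrec.snd)).and
      (hcell.forall_mem_list.comp (Primrec.const cells) (Primrec.pair Primrec.snd Primrec.fst)))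
  have hlen : PrimrecPred fun p : ℕ × List Bool => p.2.length = p.1 ^ k :=
    Primrec.eq.comp (Primrec.list_length.comp Primrec.snd)
      (Primrec.nat_pow.comp Primrec.fst (Primrec.const k))
  have hex : PrimrecPred fun p : ℕ × List Bool => ∃ n ∈ List.range (p.1 + 1), 1 ≤ n ∧
      n + m ≤ p.1 ∧ ∀ x ∈ cells,
        p.2.getD (arrayIndex p.1 (fun j => x.2 j) + n * p.1 ^ (x.1 : ℕ)) false = pattern x :=
    hshift.exists_mem_list.comp (Primrec.list_range.comp (Primrec.succ.comp Primrec.fst))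
      Primrec.id
  refine (hlen.and hex).of_eq fun p => ?_
  simp only [recurrenceWitnesses, Set.mem_ofPred_eq, arrayIndex_add_single]
  refine and_congr_right fun _ => ⟨fun ⟨n, _, hn, hnm, h⟩ => ?_, fun ⟨n, hn, hnm, h⟩ => ?_⟩
  · exact ⟨n, hn, hnm, fun i u => h (i, u) (by simp [cells])⟩
  · exact ⟨n, List.mem_range.2 (by omega), hn, hnm, fun x _ => h x.1 x.2⟩

theorem ceArrays_of_primrecPred {S : Set (ℕ × List Bool)} (hS : PrimrecPred (· ∈ S)) :
    CEArrays S := by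
  obtain ⟨_, hS⟩ := hS
  have hguard : Primrec₂ fun (_ : ℕ) (p : ℕ × List Bool) => Option.guard (· ∈ S) p :=
    Primrec.option_guard (p := fun _ q => q ∈ S) (hS.primrecPred.comp Primrec.snd) Primrec.snd
  refine ⟨fun e => (Encodable.decode (α := ℕ × List Bool) e).bind (Option.guard (· ∈ S)),
    (Primrec.option_bind Primrec.decode hguard).to_comp, ?_⟩
  ext p
  constructor
  · intro hp
    exact ⟨Encodable.encode p, by simp [hp]⟩
  · rintro ⟨e, he⟩
    obtain ⟨q, -, hq⟩ := Option.bind_eq_some_iff.1 he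
    obtain ⟨rfl, hpS⟩ := Option.guard_eq_some_iff.1 hq
    exact of_decide_eq_true hpS

section Cylinders

variable {k : ℕ}

def boxRestrict (N : ℕ) (Z : (Fin k → ℕ) → Bool) : (Fin k → Fin N) → Bool :=
  fun v => Z fun j => v j

def arrayOf {N : ℕ} (g : (Fin k → Fin N) → Bool) : List Bool :=
  List.ofFn fun c => g (finFunctionFinEquiv.symm c)

theorem arrayAgrees_arrayOf_iff {N : ℕ} (g : (Fin k → Fin N) → Bool) (Z : (Fin k → ℕ) → Bool) :
    ArrayAgrees N (arrayOf g) Z ↔ boxRestrict N Z = g := by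
  simp only [ArrayAgrees, arrayOf, List.length_ofFn, true_and, funext_iff, boxRestrict]
  refine forall_congr' fun v => ?_
  rw [List.getD_eq_getElem _ _ (by rw [List.length_ofFn]; exact (finFunctionFinEquiv v).isLt),
    List.getElem_ofFn, Fin.eta, Equiv.symm_apply_apply, eq_comm]

theorem measure_le_card_mul_of_boxRestrict_mem {μ : Measure ((Fin k → ℕ) → Bool)}
    (hμ : IsUniformMeasureK μ) {N : ℕ} {E : Set ((Fin k → ℕ) → Bool)}
    (G : Finset ((Fin k → Fin N) → Bool)) (hG : ∀ Z ∈ E, boxRestrict N Z ∈ G) :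
    μ E ≤ G.card * 2⁻¹ ^ (N ^ k) :=
  calc μ E ≤ μ (⋃ g ∈ G, {Z | ArrayAgrees N (arrayOf g) Z}) :=
        measure_mono fun Z hZ => Set.mem_biUnion (hG Z hZ) ((arrayAgrees_arrayOf_iff _ Z).2 rfl)
    _ ≤ ∑ g ∈ G, μ {Z | ArrayAgrees N (arrayOf g) Z} := measure_biUnion_finset_le _ _
    _ = G.card * 2⁻¹ ^ (N ^ k) := by
        rw [Finset.sum_congr rfl fun g _ => hμ N (arrayOf g) List.length_ofFn, Finset.sum_const,
          nsmul_eq_mul]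

end Cylinders

theorem card_filter_forall_ne_mul_le {A B : Type*} [Fintype A] [DecidableEq A] [Fintype B]
    {t : ℕ} {ι : Fin t × B → A} (hι : Function.Injective ι) (τ : B → Bool) :
    (Finset.univ.filter fun g : A → Bool => ∀ s, (fun b => g (ι (s, b))) ≠ τ).card *
        2 ^ (t * Fintype.card B) ≤ (2 ^ Fintype.card B - 1) ^ t * 2 ^ Fintype.card A := by
  classical
  let Φ : {g : A → Bool // ∀ s, (fun b => g (ι (s, b))) ≠ τ} →
      (Fin t → {h : B → Bool // h ≠ τ}) × ({a // a ∉ Set.range ι} → Bool) :=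
    fun g => (fun s => ⟨fun b => g.1 (ι (s, b)), g.2 s⟩, fun a => g.1 a)
  have hΦ : Function.Injective Φ := by
    rintro ⟨g₁, _⟩ ⟨g₂, _⟩ h
    simp only [Φ, Prod.mk.injEq, funext_iff, Subtype.ext_iff] at h
    ext a
    by_cases ha : a ∈ Set.range ι
    · obtain ⟨⟨s, b⟩, rfl⟩ := ha
      exact h.1 s b
    · exact h.2 ⟨a, ha⟩
  have hrange : Fintype.card {a // a ∉ Set.range ι} + t * Fintype.card B = Fintype.card A := by
    have hle := Fintype.card_le_of_injective ι hι
    rw [Fintype.card_prod, Fintype.card_fin] at hle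
    rw [Fintype.card_subtype_compl, Set.card_range_of_injective hι, Fintype.card_prod,
      Fintype.card_fin, Nat.sub_add_cancel hle]
  have hne : Fintype.card {h : B → Bool // h ≠ τ} = 2 ^ Fintype.card B - 1 := by
    rw [Fintype.card_subtype_compl, Fintype.card_subtype_eq, Fintype.card_fun, Fintype.card_bool]
  calc _ = Fintype.card {g : A → Bool // ∀ s, (fun b => g (ι (s, b))) ≠ τ} *
        2 ^ (t * Fintype.card B) := by rw [Fintype.card_subtype]
    _ ≤ Fintype.card ((Fin t → {h : B → Bool // h ≠ τ}) × ({a // a ∉ Set.range ι} → Bool)) *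
        2 ^ (t * Fintype.card B) := Nat.mul_le_mul_right _ (Fintype.card_le_of_injective Φ hΦ)
    _ = (2 ^ Fintype.card B - 1) ^ t * 2 ^ Fintype.card A := by
        rw [Fintype.card_prod, Fintype.card_fun, Fintype.card_fin, Fintype.card_fun,
          Fintype.card_bool, hne, mul_assoc, ← pow_add, hrange]

/-- Spacing the translates by `m + 1` rather than `m` keeps them disjoint from the `m`-box and
from each other, and keeps the shift positive when `m = 0`. -/
def translateCell (k m t : ℕ) (x : Fin t × (Fin k × (Fin k → Fin m))) :
    Fin k → Fin ((m + 1) * (t + 1)) :=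
  fun j => ⟨((fun j => (x.2.2 j : ℕ)) +
    (Pi.single x.2.1 ((m + 1) * ((x.1 : ℕ) + 1)) : Fin k → ℕ)) j, by
    have hu := (x.2.2 j).isLt
    have hs := x.1.isLt
    have : (m + 1) * ((x.1 : ℕ) + 1) + m < (m + 1) * (t + 1) := by nlinarith
    rcases eq_or_ne j x.2.1 with rfl | h <;> simp [*] <;> omega⟩

theorem translateCell_injective (k m t : ℕ) : Function.Injective (translateCell k m t) := by
  rintro ⟨s, i, u⟩ ⟨s', i', u'⟩ h
  have hcoord : ∀ j, (u j : ℕ) + (m + 1) * (Pi.single i ((s : ℕ) + 1) : Fin k → ℕ) j =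
      u' j + (m + 1) * (Pi.single i' ((s' : ℕ) + 1) : Fin k → ℕ) j := fun j => by
    have := congrArg Fin.val (congrFun h j)
    simp only [translateCell, Pi.add_apply, Pi.single_apply] at this ⊢
    split_ifs at this ⊢ <;> simpa using this
  have hdiv : ∀ j, (Pi.single i ((s : ℕ) + 1) : Fin k → ℕ) j =
      (Pi.single i' ((s' : ℕ) + 1) : Fin k → ℕ) j := fun j => by
    have := congrArg (· / (m + 1)) (hcoord j)
    simpa [Nat.add_mul_div_left _ _ (Nat.succ_pos m),
      Nat.div_eq_of_lt (Nat.lt_succ_of_lt (u j).isLt),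
      Nat.div_eq_of_lt (Nat.lt_succ_of_lt (u' j).isLt)] using this
  have hmod : ∀ j, (u j : ℕ) = u' j := fun j => by
    have := congrArg (· % (m + 1)) (hcoord j)
    simpa [Nat.mod_eq_of_lt (Nat.lt_succ_of_lt (u j).isLt),
      Nat.mod_eq_of_lt (Nat.lt_succ_of_lt (u' j).isLt)] using this
  obtain rfl : i = i' := by
    by_contra hne
    simpa [Pi.single_apply, hne] using hdiv i
  have hss : s = s' := Fin.ext (by simpa using hdiv i)
  subst hss
  simp only [Prod.mk.injEq, true_and]
  exact funext fun j => Fin.ext (hmod j)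

theorem ENNReal.natCast_mul_inv_two_pow_le {a b c L : ℕ} (h : a * 2 ^ c ≤ b * 2 ^ L) :
    (a : ℝ≥0∞) * 2⁻¹ ^ L ≤ b * 2⁻¹ ^ c := by
  rw [← ENNReal.inv_pow, ← ENNReal.inv_pow, ← div_eq_mul_inv, ← div_eq_mul_inv,
    ENNReal.div_le_iff (by simp) (by simp), div_eq_mul_inv, mul_assoc, mul_comm _ (2 ^ L : ℝ≥0∞),
    ← mul_assoc, ← div_eq_mul_inv, ENNReal.le_div_iff_mul_le (by simp) (by simp)]
  exact_mod_cast h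

section Recurrence

variable {k m : ℕ} {w : List Bool} {μ : Measure ((Fin k → ℕ) → Bool)}

theorem measure_compl_openClK_recurrenceWitnesses_le (hμ : IsUniformMeasureK μ)
    (hw : w.length = m ^ k) (t : ℕ) :
    μ (openClK (recurrenceWitnesses k m w))ᶜ ≤
      (((2 ^ (k * m ^ k) - 1 : ℕ) : ℝ≥0∞) * 2⁻¹ ^ (k * m ^ k)) ^ t := by
  let τ : Fin k × (Fin k → Fin m) → Bool := fun x => w.getD (arrayIndex m fun j => x.2 j) false
  let G := Finset.univ.filter fun g : (Fin k → Fin ((m + 1) * (t + 1))) → Bool =>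
    ∀ s, (fun x => g (translateCell k m t (s, x))) ≠ τ
  have hG : ∀ Z ∈ (openClK (recurrenceWitnesses k m w))ᶜ,
      boxRestrict ((m + 1) * (t + 1)) Z ∈ G := by
    intro Z hZ
    simp only [G, Finset.mem_filter, Finset.mem_univ, true_and]
    intro s hs
    have hagree := (arrayAgrees_arrayOf_iff (boxRestrict ((m + 1) * (t + 1)) Z) Z).2 rfl
    refine hZ ⟨_, (mem_recurrenceWitnesses_iff hw hagree).2 ⟨(m + 1) * (s + 1),
      Nat.mul_pos m.succ_pos s.succ_pos, ?_, fun i => (arrayAgrees_iterate_shiftK_iff hw i _ Z).2 fun u => ?_⟩, hagree⟩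
    · have := s.isLt
      nlinarith
    · exact (congrFun hs (i, u)).symm
  have hcount := card_filter_forall_ne_mul_le (translateCell_injective k m t) τ
  simp only [Fintype.card_prod, Fintype.card_fin, Fintype.card_fun] at hcount
  calc μ (openClK (recurrenceWitnesses k m w))ᶜ ≤ G.card * 2⁻¹ ^ (((m + 1) * (t + 1)) ^ k) :=
        measure_le_card_mul_of_boxRestrict_mem hμ G hG
    _ ≤ ((2 ^ (k * m ^ k) - 1) ^ t : ℕ) * 2⁻¹ ^ (t * (k * m ^ k)) :=
        ENNReal.natCast_mul_inv_two_pow_le hcount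
    _ = _ := by rw [mul_pow, ← pow_mul, mul_comm (k * m ^ k) t, Nat.cast_pow]

theorem measure_compl_openClK_recurrenceWitnesses (hμ : IsUniformMeasureK μ)
    (hw : w.length = m ^ k) : μ (openClK (recurrenceWitnesses k m w))ᶜ = 0 := by
  have hr : ((2 ^ (k * m ^ k) - 1 : ℕ) : ℝ≥0∞) * 2⁻¹ ^ (k * m ^ k) < 1 := by
    rw [← ENNReal.inv_pow, ← div_eq_mul_inv, ENNReal.div_lt_iff (by simp) (by simp), one_mul]
    exact_mod_cast Nat.sub_lt (by positivity) one_pos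
  exact le_antisymm (ge_of_tendsto' (ENNReal.tendsto_pow_atTop_nhds_zero_of_lt_one hr)
    (measure_compl_openClK_recurrenceWitnesses_le hμ hw)) bot_le

end Recurrence

theorem kurtzRandomK_multiplyRecurrent_clopen_general (k : ℕ)
    (μ : Measure ((Fin k → ℕ) → Bool)) (hμ : IsUniformMeasureK μ)
    (P : Set ((Fin k → ℕ) → Bool))
    (hP : ∃ F : Finset (ℕ × List Bool), P = openClK ↑F) (hPne : P.Nonempty)
    (Z : (Fin k → ℕ) → Bool) (hZ : KurtzRandomK μ Z) :
    MultiplyRecurrentK P Z := by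
  obtain ⟨F, rfl⟩ := hP
  obtain ⟨-, ⟨m, w⟩, hF, hw, -⟩ := hPne
  replace hw : w.length = m ^ k := hw
  have hnull := measure_compl_openClK_recurrenceWitnesses hμ hw
  have hpi : Pi01ClassK (openClK (k := k) (recurrenceWitnesses k m w))ᶜ :=
    ⟨_, ceArrays_of_primrecPred (primrecPred_mem_recurrenceWitnesses k m w), rfl⟩
  exact multiplyRecurrentK_of_mem_openClK hF hw (not_not.1 (hZ _ hpi hnull))

/-- Every weakly (Kurtz) random point of `X_k = {0,1}^(ℕ^k)` is multiply recurrent in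
every non-empty clopen subset of `X_k`. -/
theorem kurtzRandomK_multiplyRecurrent_clopen (k : ℕ) (hk : 1 ≤ k)
    (μ : Measure ((Fin k → ℕ) → Bool)) (hμ : IsUniformMeasureK μ)
    (P : Set ((Fin k → ℕ) → Bool))
    (hP : ∃ F : Finset (ℕ × List Bool), P = openClK ↑F) (hPne : P.Nonempty)
    (Z : (Fin k → ℕ) → Bool) (hZ : KurtzRandomK μ Z) :
    MultiplyRecurrentK P Z :=
  kurtzRandomK_multiplyRecurrent_clopen_general k μ hμ P hP hPne Z hZ
end

section
/- Every point in a Kronecker system is 1-recurrent: if G is a compact Hausdorff topological group, a ∈ G, and T_a : G → G is defined by T_a(x) = a · x, then for every x ∈ G and every open neighbourhood U of x there is n ≥ 1 such that T_a^n(x) ∈ U (equivalently, a^n · x ∈ U). -/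
open Filter Topology

theorem frequently_atTop_pow_mul_mem {G : Type*} [Group G] [TopologicalSpace G]
    [IsTopologicalGroup G] [CompactSpace G] (a x : G) {U : Set G} (hU : U ∈ 𝓝 x) :
    ∃ᶠ n : ℕ in atTop, a ^ n * x ∈ U := by
  have hU₁ : (· * x) ⁻¹' U ∈ 𝓝 (1 : G) :=
    (continuous_mul_const x).continuousAt.preimage_mem_nhds (by simpa using hU)
  exact (mapClusterPt_one_atTop_pow a).frequently hU₁

theorem kronecker_one_recurrent_general {G : Type*} [Group G] [TopologicalSpace G]
    [IsTopologicalGroup G] [CompactSpace G] (a : G) (x : G)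
    (U : Set G) (hU : IsOpen U) (hxU : x ∈ U) :
    ∃ n : ℕ, 1 ≤ n ∧ a ^ n * x ∈ U := by
  obtain ⟨n, hnU, hn⟩ :=
    ((frequently_atTop_pow_mul_mem a x (hU.mem_nhds hxU)).and_eventually
      (eventually_ge_atTop 1)).exists
  exact ⟨n, hn, hnU⟩

/-- Every point in a Kronecker system is `1`-recurrent: for a compact Hausdorff
topological group `G`, `a ∈ G`, and the translation `T_a x = a * x`, every point `x`
returns to each of its open neighbourhoods, i.e. `a ^ n * x ∈ U` for some `n ≥ 1`. -/
theorem kronecker_one_recurrent {G : Type*} [Group G] [TopologicalSpace G]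
    [IsTopologicalGroup G] [CompactSpace G] [T2Space G] (a : G) (x : G)
    (U : Set G) (hU : IsOpen U) (hxU : x ∈ U) :
    ∃ n : ℕ, 1 ≤ n ∧ a ^ n * x ∈ U :=
  kronecker_one_recurrent_general a x U hU hxU
end

section
/- Every point in a Kronecker system is multiply recurrent: if G is a compact Hausdorff topological group and a ∈ G, then for every x ∈ G, every k ≥ 1, and every open neighbourhood U of x, there is n ≥ 1 such that a^{in} · x ∈ U for every i with 1 ≤ i ≤ k. -/
/-! In a compact group the identity is a cluster point of `n ↦ a ^ n`. Since
`g ↦ (g ^ i)_{1 ≤ i ≤ k}` is continuous and fixes `1`, whenever `a ^ n` is close enough to `1`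
so are all `a ^ (i * n)`, and then all `a ^ (i * n) * x` are close to `x`. -/

open Filter Topology

theorem frequently_atTop_forall_pow_mul_mem {G : Type*} [Group G] [TopologicalSpace G]
    [IsTopologicalGroup G] [CompactSpace G] (a : G) {V : Set G} (hV : V ∈ 𝓝 1)
    (s : Finset ℕ) : ∃ᶠ n in atTop, ∀ i ∈ s, a ^ (i * n) ∈ V := by
  have hpow : ∀ᶠ g in 𝓝 (1 : G), ∀ i ∈ s, g ^ i ∈ V :=
    (eventually_all_finset s).mpr fun i _ =>
      (continuous_pow i).continuousAt.preimage_mem_nhds (by simpa using hV)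
  simpa only [mul_comm _ (_ : ℕ), pow_mul, Set.mem_ofPred_eq] using
    mapClusterPt_iff_frequently.mp (mapClusterPt_one_atTop_pow a) _ hpow

theorem kronecker_multiply_recurrent_general {G : Type*} [Group G] [TopologicalSpace G]
    [IsTopologicalGroup G] [CompactSpace G] (a : G) (x : G)
    (k : ℕ) (U : Set G) (hU : IsOpen U) (hxU : x ∈ U) :
    ∃ n : ℕ, 1 ≤ n ∧ ∀ i : ℕ, 1 ≤ i → i ≤ k → a ^ (i * n) * x ∈ U := by
  have hV : (· * x) ⁻¹' U ∈ 𝓝 (1 : G) :=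
    (continuous_mul_const x).continuousAt.preimage_mem_nhds (by simpa using hU.mem_nhds hxU)
  obtain ⟨n, hn, hmem⟩ :=
    frequently_atTop.mp (frequently_atTop_forall_pow_mul_mem a hV (Finset.Icc 1 k)) 1
  exact ⟨n, hn, fun i hi hik => hmem i (Finset.mem_Icc.mpr ⟨hi, hik⟩)⟩

/-- Every point in a Kronecker system is multiply recurrent: for a compact Hausdorff
topological group `G`, `a ∈ G`, every `x ∈ G`, every `k ≥ 1` and every open
neighbourhood `U` of `x`, there is `n ≥ 1` with `a ^ (i * n) * x ∈ U` for all
`1 ≤ i ≤ k`. -/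
theorem kronecker_multiply_recurrent {G : Type*} [Group G] [TopologicalSpace G]
    [IsTopologicalGroup G] [CompactSpace G] [T2Space G] (a : G) (x : G)
    (k : ℕ) (hk : 1 ≤ k) (U : Set G) (hU : IsOpen U) (hxU : x ∈ U) :
    ∃ n : ℕ, 1 ≤ n ∧ ∀ i : ℕ, 1 ≤ i → i ≤ k → a ^ (i * n) * x ∈ U :=
  kronecker_multiply_recurrent_general a x k U hU hxU
end
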